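/- Let d ∈ {3, 4, 5}, fix p_S ∈ [0, 1/2], let S := H(p_S) where H(p) := −p·log₂ p − (1 − p)·log₂(1 − p), and set x := √(1 − (1 − 2p_S)²). Define ω : Fin d × Fin d → ℝ by ω_{00} = ω_{(d−1)(d−1)} = (1 + x)/4, ω_{0(d−1)} = ω_{(d−1)0} = (1 − x)/4, and ω_{ln} = 0 otherwise. Then ω is a valid probability weight (nonnegative entries summing to 1), its entanglement entropy satisfies S_d(ω) = S, and Q(ω) = 8(1 + x). (This is the optimal two-qudit probe |ψ^o_{2,d}(S)⟩ at fixed entanglement entropy S.) -/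

import Mathlib

open Matrix

/-- Rescaled, equally spaced eigenvalues `η̄_j = (2j − (d−1))/(d−1) ∈ [−1, 1]` of the local
rescaled spin-z operator `Z̄_d`. -/
noncomputable def etabar (d : ℕ) (j : Fin d) : ℝ :=
  (2 * (j : ℝ) - ((d : ℝ) - 1)) / ((d : ℝ) - 1)

/-- Quantum Fisher information of the two-qudit probe `|ψ⟩ = Σ_{l,n} √ω_{ln} |l n⟩` under
the generator `h = Z̄_d⊗I + I⊗Z̄_d`:
`Q(ω) = 4[Σ ω_{ln}(η̄_l + η̄_n)² − (Σ ω_{ln}(η̄_l + η̄_n))²]`. -/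
noncomputable def QFId (d : ℕ) (ω : Fin d × Fin d → ℝ) : ℝ :=
  4 * ((∑ l, ∑ n, ω (l, n) * (etabar d l + etabar d n) ^ 2) -
    (∑ l, ∑ n, ω (l, n) * (etabar d l + etabar d n)) ^ 2)

/-- The matrix of coefficients `A_{ln} = √ω_{ln}` of the probe. -/
noncomputable def Amat (d : ℕ) (ω : Fin d × Fin d → ℝ) : Matrix (Fin d) (Fin d) ℝ :=
  Matrix.of fun l n => Real.sqrt (ω (l, n))

/-- The Gram matrix `AᵀA` is real symmetric (Hermitian). -/
theorem gram_isHermitian (d : ℕ) (ω : Fin d × Fin d → ℝ) :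
    ((Amat d ω)ᵀ * Amat d ω).IsHermitian := by
  rw [← Matrix.conjTranspose_eq_transpose_of_trivial]
  exact Matrix.isHermitian_conjTranspose_mul_self _

/-- The eigenvalues of `AᵀA` (the squared Schmidt coefficients of the probe). -/
noncomputable def gramEig (d : ℕ) (ω : Fin d × Fin d → ℝ) : Fin d → ℝ :=
  (gram_isHermitian d ω).eigenvalues

/-- Generalized geometric measure `g_d(ω) = 1 − λ_max(AᵀA)`. -/
noncomputable def GGMd (d : ℕ) (ω : Fin d × Fin d → ℝ) : ℝ :=
  1 - ⨆ i, gramEig d ω i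

/-- Von Neumann entanglement entropy `S_d(ω) = −Σ_i λ_i log₂ λ_i`, where the `λ_i` are the
eigenvalues of `AᵀA` (with `0 log₂ 0 = 0`, automatic since `Real.logb 2 0 = 0`). -/
noncomputable def entEntropyd (d : ℕ) (ω : Fin d × Fin d → ℝ) : ℝ :=
  -∑ i, gramEig d ω i * Real.logb 2 (gramEig d ω i)

/-- Binary entropy `H(p) = −p log₂ p − (1−p) log₂ (1−p)`. -/
noncomputable def binEnt (p : ℝ) : ℝ :=
  -(p * Real.logb 2 p) - (1 - p) * Real.logb 2 (1 - p)

/-!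
The weight lives on the two extreme levels `0` and `d - 1`, so the coefficient matrix is the
symmetric block `B = [[a, b], [b, a]]`, `a = √((1 + x)/4)`, `b = √((1 - x)/4)`, padded by zeros:
`A = Pᵀ B P` with `P Pᵀ = 1`. Hence `AᵀA = Pᵀ B² P` has characteristic polynomial
`X^(d-2) · charpoly (B²)`, and its spectrum is `d - 2` zeros together with `(a ± b)²`. Since
`2ab = √(1 - x²)/2 = (1 - 2 p_S)/2`, these are `1 - p_S` and `p_S`, so the entropy is `H(p_S)`.
The generator `h` takes the values `∓2` on `|00⟩` and `|d-1 d-1⟩`, each with probability `a²`,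
and `0` on the off-diagonal pair, so `Q = 4 · 8a² = 8(1 + x)`.
-/

open Polynomial

namespace Matrix

theorem submatrix_one_mul_transpose {m n R : Type*} [Fintype n] [DecidableEq m]
    [DecidableEq n] [CommRing R] {e : m → n} (he : Function.Injective e) :
    (1 : Matrix n n R).submatrix e id * ((1 : Matrix n n R).submatrix e id)ᵀ = 1 := by
  rw [transpose_submatrix, transpose_one, ← submatrix_mul _ _ _ id _ Function.bijective_id,
    Matrix.one_mul, submatrix_one _ he]

theorem charpoly_transpose_mul_mul {m n R : Type*} [Fintype m] [Fintype n] [DecidableEq m]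
    [DecidableEq n] [CommRing R] (P : Matrix m n R)
    (hP : P * Pᵀ = 1) (hmn : Fintype.card m ≤ Fintype.card n) (G : Matrix m m R) :
    (Pᵀ * G * P).charpoly = X ^ (Fintype.card n - Fintype.card m) * G.charpoly := by
  rw [Matrix.mul_assoc, charpoly_mul_comm_of_le _ _ hmn, Matrix.mul_assoc, hP, Matrix.mul_one]

theorem charpoly_fin_two_of_symm {R : Type*} [CommRing R] [Nontrivial R] (p q : R) :
    (!![p, q; q, p]).charpoly = (X - C (p + q)) * (X - C (p - q)) := by
  rw [charpoly_fin_two, trace_fin_two_of, det_fin_two_of]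
  simp only [map_add, map_sub, map_mul]
  ring

theorem IsHermitian.sum_comp_eigenvalues {n : Type*} [Fintype n] [DecidableEq n]
    {A : Matrix n n ℝ} (hA : A.IsHermitian) (F : ℝ → ℝ) :
    ∑ i, F (hA.eigenvalues i) = (A.charpoly.roots.map F).sum := by
  rw [hA.roots_charpoly_eq_eigenvalues, Multiset.map_map]
  rfl

end Matrix

theorem sum_map_roots_X_pow_mul_X_sub_C_mul_X_sub_C (k : ℕ) (μ ν : ℝ) (F : ℝ → ℝ) :
    ((X ^ k * ((X - C μ) * (X - C ν))).roots.map F).sum = k * F 0 + F μ + F ν := by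
  rw [roots_mul (by simp [X_sub_C_ne_zero]), roots_mul (by simp [X_sub_C_ne_zero]),
    roots_X_pow, roots_X_sub_C, roots_X_sub_C]
  simp [Multiset.map_nsmul, Multiset.sum_nsmul]
  ring

section PairWeight

variable {ι : Type*} [DecidableEq ι]

def pairWeight (i j : ι) (u v : ℝ) (p : ι × ι) : ℝ :=
  if (p.1 = i ∧ p.2 = i) ∨ (p.1 = j ∧ p.2 = j) then u
  else if (p.1 = i ∧ p.2 = j) ∨ (p.1 = j ∧ p.2 = i) then v
  else 0

theorem pairWeight_nonneg (i j : ι) {u v : ℝ} (hu : 0 ≤ u) (hv : 0 ≤ v) (p : ι × ι) :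
    0 ≤ pairWeight i j u v p := by
  unfold pairWeight
  split_ifs <;> first | assumption | exact le_rfl

theorem sum_sum_pairWeight_mul [Fintype ι] {i j : ι} (hij : i ≠ j) (u v : ℝ) (g : ι → ι → ℝ) :
    ∑ l, ∑ n, pairWeight i j u v (l, n) * g l n = u * (g i i + g j j) + v * (g i j + g j i) := by
  have hrow : ∀ l, ∑ n, pairWeight i j u v (l, n) * g l n =
      pairWeight i j u v (l, i) * g l i + pairWeight i j u v (l, j) * g l j :=
    fun l => Fintype.sum_eq_add i j hij fun n hn => by simp [pairWeight, hn.1, hn.2]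
  rw [Fintype.sum_eq_add i j hij fun l hl =>
    Finset.sum_eq_zero fun n _ => by simp [pairWeight, hl.1, hl.2], hrow, hrow]
  simp [pairWeight, hij, hij.symm]
  ring

theorem sum_pairWeight [Fintype ι] {i j : ι} (hij : i ≠ j) (u v : ℝ) :
    ∑ p, pairWeight i j u v p = 2 * (u + v) := by
  have h := sum_sum_pairWeight_mul hij u v fun _ _ => 1
  simp only [mul_one] at h
  rw [Fintype.sum_prod_type, h]
  ring

end PairWeight

theorem Amat_pairWeight {d : ℕ} {i j : Fin d} (hij : i ≠ j) (u v : ℝ) :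
    Amat d (pairWeight i j u v) =
      ((1 : Matrix (Fin d) (Fin d) ℝ).submatrix ![i, j] id)ᵀ * !![√u, √v; √v, √u] *
        (1 : Matrix (Fin d) (Fin d) ℝ).submatrix ![i, j] id := by
  ext l n
  simp only [Amat, pairWeight, of_apply, mul_apply, transpose_apply, submatrix_apply, one_apply,
    Fin.sum_univ_two, id]
  by_cases hli : l = i <;> by_cases hlj : l = j <;> by_cases hni : n = i <;>
    by_cases hnj : n = j <;>
    simp_all [eq_comm (a := i) (b := l), eq_comm (a := j) (b := l), eq_comm (a := i) (b := n),
      eq_comm (a := j) (b := n), eq_comm (a := j) (b := i)]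

theorem charpoly_gram_pairWeight {d : ℕ} {i j : Fin d} (hij : i ≠ j) (u v : ℝ) :
    ((Amat d (pairWeight i j u v))ᵀ * Amat d (pairWeight i j u v)).charpoly =
      X ^ (d - 2) * ((X - C ((√u + √v) ^ 2)) * (X - C ((√u - √v) ^ 2))) := by
  have he : Function.Injective ![i, j] := by
    intro a b; fin_cases a <;> fin_cases b <;> simp [hij, hij.symm]
  set P := (1 : Matrix (Fin d) (Fin d) ℝ).submatrix ![i, j] id
  set B : Matrix (Fin 2) (Fin 2) ℝ := !![√u, √v; √v, √u]
  have hP : P * Pᵀ = 1 := submatrix_one_mul_transpose he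
  have hgram : (Pᵀ * B * P)ᵀ * (Pᵀ * B * P) = Pᵀ * (B * B) * P := by
    have hB : Bᵀ = B := by ext a b; fin_cases a <;> fin_cases b <;> rfl
    simp only [transpose_mul, transpose_transpose, hB, Matrix.mul_assoc]
    rw [← Matrix.mul_assoc P, hP, Matrix.one_mul]
  have hBB : B * B = !![√u ^ 2 + √v ^ 2, 2 * √u * √v; 2 * √u * √v, √u ^ 2 + √v ^ 2] := by
    rw [mul_fin_two]; ext a b; fin_cases a <;> fin_cases b <;> simp <;> ring
  rw [Amat_pairWeight hij, hgram, charpoly_transpose_mul_mul P hP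
    (Fintype.card_le_of_injective _ he), hBB, charpoly_fin_two_of_symm]
  simp only [Fintype.card_fin]
  ring_nf

theorem entEntropyd_pairWeight {d : ℕ} {i j : Fin d} (hij : i ≠ j) (u v : ℝ) :
    entEntropyd d (pairWeight i j u v) =
      -((√u + √v) ^ 2 * Real.logb 2 ((√u + √v) ^ 2) +
        (√u - √v) ^ 2 * Real.logb 2 ((√u - √v) ^ 2)) := by
  rw [entEntropyd, gramEig,
    (gram_isHermitian d _).sum_comp_eigenvalues fun t => t * Real.logb 2 t,
    charpoly_gram_pairWeight hij, sum_map_roots_X_pow_mul_X_sub_C_mul_X_sub_C]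
  simp

theorem etabar_zero (k : ℕ) : etabar (k + 2) 0 = -1 := by
  have hk : ((k + 2 : ℕ) : ℝ) - 1 = k + 1 := by push_cast; ring
  rw [etabar, hk, Fin.val_zero]
  field_simp
  ring

theorem etabar_last (k : ℕ) : etabar (k + 2) (Fin.last (k + 1)) = 1 := by
  have hk : ((k + 2 : ℕ) : ℝ) - 1 = k + 1 := by push_cast; ring
  rw [etabar, hk, Fin.val_last]
  push_cast
  field_simp
  ring

theorem QFId_pairWeight_zero_last (k : ℕ) (u v : ℝ) :
    QFId (k + 2) (pairWeight 0 (Fin.last (k + 1)) u v) = 32 * u := by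
  rw [QFId, sum_sum_pairWeight_mul (Fin.last_pos (n := k)).ne, sum_sum_pairWeight_mul
    (Fin.last_pos (n := k)).ne, etabar_zero, etabar_last]
  ring

/-- For `d ∈ {3, 4, 5}`, `p_S ∈ [0, 1/2]`, `S = H(p_S)` and
`x = √(1 − (1 − 2p_S)²)`, the weight `ω` with `ω_{00} = ω_{(d−1)(d−1)} = (1+x)/4`,
`ω_{0(d−1)} = ω_{(d−1)0} = (1−x)/4`, and all other entries `0` is a valid probability
weight with entanglement entropy `S_d(ω) = S` and `Q(ω) = 8(1 + x)`. (The optimal two-qudit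
probe at fixed entanglement entropy `S`.) -/
theorem optimal_probe_fixed_entropy_two_qudits (d : ℕ) (hd : d = 3 ∨ d = 4 ∨ d = 5)
    (pS S x : ℝ) (hpS : pS ∈ Set.Icc (0 : ℝ) (1 / 2)) (hS : S = binEnt pS)
    (hx : x = Real.sqrt (1 - (1 - 2 * pS) ^ 2)) (ω : Fin d × Fin d → ℝ)
    (hω : ∀ l n : Fin d, ω (l, n) =
      if ((l : ℕ) = 0 ∧ (n : ℕ) = 0) ∨ ((l : ℕ) = d - 1 ∧ (n : ℕ) = d - 1) then (1 + x) / 4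
      else if ((l : ℕ) = 0 ∧ (n : ℕ) = d - 1) ∨ ((l : ℕ) = d - 1 ∧ (n : ℕ) = 0) then
        (1 - x) / 4
      else 0) :
    (∀ p, 0 ≤ ω p) ∧ (∑ p, ω p) = 1 ∧ entEntropyd d ω = S ∧
      QFId d ω = 8 * (1 + x) := by
  obtain ⟨hp0, hp2⟩ := hpS
  obtain ⟨k, rfl⟩ : ∃ k, d = k + 2 := by rcases hd with rfl | rfl | rfl <;> exact ⟨_, rfl⟩
  obtain rfl : ω = pairWeight 0 (Fin.last (k + 1)) ((1 + x) / 4) ((1 - x) / 4) := by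
    funext ⟨l, n⟩
    rw [hω]
    simp only [pairWeight, Fin.ext_iff, Fin.val_zero, Fin.val_last,
      show k + 2 - 1 = k + 1 from rfl]
  have hxsq : x ^ 2 = 1 - (1 - 2 * pS) ^ 2 := by
    rw [hx]; exact Real.sq_sqrt (by nlinarith)
  have hx0 : 0 ≤ x := hx ▸ Real.sqrt_nonneg _
  have hx1 : x ≤ 1 := by nlinarith
  have hprod : √((1 + x) / 4) * √((1 - x) / 4) = (1 - 2 * pS) / 4 := by
    rw [← Real.sqrt_mul (by linarith), show (1 + x) / 4 * ((1 - x) / 4) = ((1 - 2 * pS) / 4) ^ 2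
      by linear_combination -hxsq / 16, Real.sqrt_sq (by linarith)]
  have hu : √((1 + x) / 4) ^ 2 = (1 + x) / 4 := Real.sq_sqrt (by linarith)
  have hv : √((1 - x) / 4) ^ 2 = (1 - x) / 4 := Real.sq_sqrt (by linarith)
  have hne : (0 : Fin (k + 2)) ≠ Fin.last (k + 1) := (Fin.last_pos (n := k)).ne
  refine ⟨pairWeight_nonneg _ _ (by linarith) (by linarith), ?_, ?_, ?_⟩
  · rw [sum_pairWeight hne]; ring
  · rw [entEntropyd_pairWeight hne, hS, binEnt,
      show (√((1 + x) / 4) + √((1 - x) / 4)) ^ 2 = 1 - pS by linear_combination hu + hv + 2 * hprod,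
      show (√((1 + x) / 4) - √((1 - x) / 4)) ^ 2 = pS by linear_combination hu + hv - 2 * hprod]
    ring
  · rw [QFId_pairWeight_zero_last]; ring
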